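/- arXiv:1701.08703 — 2 statements merged into one kernel-verified Lean document; each statement's English description precedes it below -/
import Mathlib

section
/- Let S be a complete starsemiring and let M be a restricted one-counter (roc) matrix over S^{n×n} with counter symbol p. Then for all i ≥ 0 one has (M*)_{p^{i+1},ε} = (M*)_{p,ε} · (M*)_{p^i,ε}. -/
/-!
Common definitions: complete semirings with infinite sums, complete
semiring-semimodule pairs with infinite products, restricted one-counter
(roc) matrices, their star and omega blocks, power series over finite and
infinite words, weighted ω-restricted one-counter automata, and the mixed
context-free grammars obtained by the triple-pair construction.
-/

/-- The data of a semiring together with sums over arbitrary index sets. -/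
structure CSOps (S : Type) where
  add : S → S → S
  mul : S → S → S
  zero : S
  one : S
  iSum : ∀ {ι : Type}, (ι → S) → S

namespace CSOps

variable {S : Type}

/-- Powers `a^m`. -/
def pow (R : CSOps S) (a : S) : ℕ → S
  | 0 => R.one
  | m + 1 => R.mul a (R.pow a m)

/-- The star operation of a complete starsemiring: `a* = Σ_{m≥0} a^m`. -/
def star (R : CSOps S) (a : S) : S := R.iSum fun m : ℕ => R.pow a m

/-- Finite sums of lists of elements. -/
def listSum (R : CSOps S) (l : List S) : S := l.foldr R.add R.zero

/-- Finite (ordered) products of lists of elements. -/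
def listProd (R : CSOps S) (l : List S) : S := l.foldr R.mul R.one

/-- The ordered product `s_a · s_{a+1} ⋯ s_{b-1}`. -/
def rangeProd (R : CSOps S) (s : ℕ → S) (a b : ℕ) : S :=
  R.listProd ((List.range' a (b - a)).map s)

/-- `R` is a complete semiring: the operations form a semiring, the infinite
sums extend the finite ones, are associative and commutative (compatible with
arbitrary partitions of the index set) and satisfy both distributive laws. -/
structure IsComplete (R : CSOps S) : Prop where
  add_assoc : ∀ a b c, R.add (R.add a b) c = R.add a (R.add b c)
  add_comm : ∀ a b, R.add a b = R.add b a
  zero_add : ∀ a, R.add R.zero a = a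
  mul_assoc : ∀ a b c, R.mul (R.mul a b) c = R.mul a (R.mul b c)
  one_mul : ∀ a, R.mul R.one a = a
  mul_one : ∀ a, R.mul a R.one = a
  zero_mul : ∀ a, R.mul R.zero a = R.zero
  mul_zero : ∀ a, R.mul a R.zero = R.zero
  left_distrib : ∀ a b c, R.mul a (R.add b c) = R.add (R.mul a b) (R.mul a c)
  right_distrib : ∀ a b c, R.mul (R.add a b) c = R.add (R.mul a c) (R.mul b c)
  iSum_empty : ∀ {ι : Type} (f : ι → S), IsEmpty ι → R.iSum f = R.zero
  iSum_single : ∀ {ι : Type} (f : ι → S) (i₀ : ι), (∀ i, i = i₀) → R.iSum f = f i₀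
  iSum_pair : ∀ {ι : Type} (f : ι → S) (i₀ i₁ : ι), i₀ ≠ i₁ → (∀ i, i = i₀ ∨ i = i₁) →
      R.iSum f = R.add (f i₀) (f i₁)
  iSum_partition : ∀ {ι κ : Type} (g : ι → κ) (f : ι → S),
      R.iSum (fun j : κ => R.iSum (fun i : {i : ι // g i = j} => f i.1)) = R.iSum f
  mul_iSum : ∀ {ι : Type} (c : S) (f : ι → S), R.mul c (R.iSum f) = R.iSum fun i => R.mul c (f i)
  iSum_mul : ∀ {ι : Type} (c : S) (f : ι → S), R.mul (R.iSum f) c = R.iSum fun i => R.mul (f i) c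

/-- `R` is a continuous starsemiring: it is complete and every infinite sum is
the least upper bound, with respect to the natural order `a ≤ b ↔ ∃ c, a + c = b`,
of the sums over the finite subfamilies. -/
structure IsContinuous (R : CSOps S) : Prop where
  complete : R.IsComplete
  finsumLe : ∀ {ι : Type} (f : ι → S) (l : List ι), l.Nodup →
      ∃ c, R.add (R.listSum (l.map f)) c = R.iSum f
  iSumLeast : ∀ {ι : Type} (f : ι → S) (b : S),
      (∀ l : List ι, l.Nodup → ∃ c, R.add (R.listSum (l.map f)) c = b) →
      ∃ c, R.add (R.iSum f) c = b

end CSOps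

/-- The data of a left `S`-semimodule `V` with sums over arbitrary index sets and
an infinite product operation mapping infinite sequences over `S` to `V`. -/
structure CPOps (S V : Type) where
  vadd : V → V → V
  vzero : V
  smul : S → V → V
  vSum : ∀ {ι : Type}, (ι → V) → V
  iProd : (ℕ → S) → V

namespace CPOps

variable {S V : Type}

/-- `(S, V)` (with operations `R`, `P`) is a complete semiring-semimodule pair. -/
structure IsComplete (R : CSOps S) (P : CPOps S V) : Prop where
  vadd_assoc : ∀ u v w, P.vadd (P.vadd u v) w = P.vadd u (P.vadd v w)
  vadd_comm : ∀ u v, P.vadd u v = P.vadd v u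
  vzero_vadd : ∀ v, P.vadd P.vzero v = v
  mul_smul : ∀ a b v, P.smul (R.mul a b) v = P.smul a (P.smul b v)
  one_smul : ∀ v, P.smul R.one v = v
  add_smul : ∀ a b v, P.smul (R.add a b) v = P.vadd (P.smul a v) (P.smul b v)
  smul_vadd : ∀ a u v, P.smul a (P.vadd u v) = P.vadd (P.smul a u) (P.smul a v)
  zero_smul : ∀ v, P.smul R.zero v = P.vzero
  smul_vzero : ∀ a, P.smul a P.vzero = P.vzero
  vSum_empty : ∀ {ι : Type} (f : ι → V), IsEmpty ι → P.vSum f = P.vzero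
  vSum_single : ∀ {ι : Type} (f : ι → V) (i₀ : ι), (∀ i, i = i₀) → P.vSum f = f i₀
  vSum_pair : ∀ {ι : Type} (f : ι → V) (i₀ i₁ : ι), i₀ ≠ i₁ → (∀ i, i = i₀ ∨ i = i₁) →
      P.vSum f = P.vadd (f i₀) (f i₁)
  vSum_partition : ∀ {ι κ : Type} (g : ι → κ) (f : ι → V),
      P.vSum (fun j : κ => P.vSum (fun i : {i : ι // g i = j} => f i.1)) = P.vSum f
  smul_vSum : ∀ {ι : Type} (a : S) (f : ι → V),
      P.smul a (P.vSum f) = P.vSum fun i => P.smul a (f i)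
  iSum_smul : ∀ {ι : Type} (f : ι → S) (v : V),
      P.smul (R.iSum f) v = P.vSum fun i => P.smul (f i) v
  iProd_regroup : ∀ (s : ℕ → S) (e : ℕ → ℕ), e 0 = 0 → Monotone e →
      P.iProd s = P.iProd fun i => R.rangeProd s (e i) (e (i + 1))
  smul_iProd_shift : ∀ s : ℕ → S, P.smul (s 0) (P.iProd fun i => s (i + 1)) = P.iProd s
  iProd_iSum : ∀ (I : ℕ → Type) (s : ∀ j, I j → S),
      P.iProd (fun j => R.iSum (s j)) = P.vSum fun f : (∀ j, I j) => P.iProd fun j => s j (f j)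

end CPOps

/-! ### Matrices of blocks indexed by the counter contents `p^i ↔ i` -/

/-- An `n × n` block of weights. -/
abbrev Blk (n : ℕ) (S : Type) := Fin n → Fin n → S

def bZero {S : Type} (R : CSOps S) {n : ℕ} : Blk n S := fun _ _ => R.zero

def bOne {S : Type} (R : CSOps S) {n : ℕ} : Blk n S :=
  fun i j => if i = j then R.one else R.zero

def bAdd {S : Type} (R : CSOps S) {n : ℕ} (X Y : Blk n S) : Blk n S :=
  fun i j => R.add (X i j) (Y i j)

def bMul {S : Type} (R : CSOps S) {n : ℕ} (X Y : Blk n S) : Blk n S :=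
  fun i j => R.iSum fun l : Fin n => R.mul (X i l) (Y l j)

def bPow {S : Type} (R : CSOps S) {n : ℕ} (X : Blk n S) : ℕ → Blk n S
  | 0 => bOne R
  | m + 1 => bMul R X (bPow R X m)

/-- A matrix in `(S^{n×n})^{p* × p*}`: rows and columns are indexed by the words
`p^i` (identified with `i : ℕ`) and the entries are `n × n` blocks over `S`. -/
abbrev IMat (n : ℕ) (S : Type) := ℕ → ℕ → Blk n S

def iMatMul {S : Type} (R : CSOps S) {n : ℕ} (M N : IMat n S) : IMat n S :=
  fun i j => fun a b => R.iSum fun l : ℕ => bMul R (M i l) (N l j) a b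

def iMatOne {S : Type} (R : CSOps S) {n : ℕ} : IMat n S :=
  fun i j => if i = j then bOne R else bZero R

def iMatPow {S : Type} (R : CSOps S) {n : ℕ} (M : IMat n S) : ℕ → IMat n S
  | 0 => iMatOne R
  | m + 1 => iMatMul R M (iMatPow R M m)

/-- `iStar R M i j` is the block `(M*)_{p^i, p^j} = Σ_{m≥0} (M^m)_{p^i, p^j}`. -/
def iStar {S : Type} (R : CSOps S) {n : ℕ} (M : IMat n S) : IMat n S :=
  fun i j => fun a b => R.iSum fun m : ℕ => iMatPow R M m i j a b

/-- `M` is a restricted one-counter (roc) matrix (with counter symbol `p`):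
there are blocks `A = M_{p,p²}`, `C = M_{p,p}`, `B = M_{p,ε}` with
`M_{p^k,p^{k+1}} = A`, `M_{p^k,p^k} = C`, `M_{p^k,p^{k-1}} = B` for all `k ≥ 1`,
and all other blocks are `0`. -/
def IsRoc {S : Type} (R : CSOps S) {n : ℕ} (M : IMat n S) : Prop :=
  (∀ k : ℕ, 1 ≤ k → M k (k + 1) = M 1 2 ∧ M k k = M 1 1 ∧ M k (k - 1) = M 1 0) ∧
  (∀ i j : ℕ, (i = 0 ∨ (j ≠ i + 1 ∧ j ≠ i ∧ j + 1 ≠ i)) → M i j = bZero R)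

/-! ### Vectors over the semimodule -/

def vecAdd {S V : Type} (P : CPOps S V) {n : ℕ} (u v : Fin n → V) : Fin n → V :=
  fun a => P.vadd (u a) (v a)

/-- A block acting on a vector of semimodule elements: `(X z)_a = Σ_l X_{a l} z_l`. -/
def matVec {S V : Type} (P : CPOps S V) {n : ℕ} (X : Blk n S) (v : Fin n → V) : Fin n → V :=
  fun a => P.vSum fun l : Fin n => P.smul (X a l) (v l)

/-- A row vector acting on a column vector of semimodule elements: `I z = Σ_m I_m z_m`. -/
def rowAct {S V : Type} (P : CPOps S V) {n : ℕ} (Iv : Fin n → S) (v : Fin n → V) : V :=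
  P.vSum fun m : Fin n => P.smul (Iv m) (v m)

/-- The scalar `I · X · P = Σ_{m₁,m₂} I_{m₁} X_{m₁ m₂} P_{m₂}`. -/
def tripleProd {S : Type} (R : CSOps S) {n : ℕ} (Iv : Fin n → S) (X : Blk n S)
    (Pv : Fin n → S) : S :=
  R.iSum fun q : Fin n × Fin n => R.mul (Iv q.1) (R.mul (X q.1 q.2) (Pv q.2))

/-- The sequence of weights along an infinite path starting in row block `p^i`,
state `j`, and then visiting the blocks `p^{hs 0}, p^{hs 1}, …` in states
`js 0, js 1, …`. -/
def pathEntry {S : Type} {n : ℕ} (M : IMat n S) (i : ℕ) (j : Fin n)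
    (hs : ℕ → ℕ) (js : ℕ → Fin n) : ℕ → S
  | 0 => M i (hs 0) j (js 0)
  | t + 1 => M (hs t) (hs (t + 1)) (js t) (js (t + 1))

/-- The block `(M^ω)_{p^i}` of the column vector `M^ω ∈ (V^n)^{p*}`:
`((M^ω)_{p^i})_j` is the sum over all infinite sequences of pushdown contents and
states of the infinite products of the corresponding entries of `M`. -/
def mOmega {S V : Type} (P : CPOps S V) {n : ℕ} (M : IMat n S) (i : ℕ) : Fin n → V :=
  fun j => P.vSum fun q : (ℕ → ℕ) × (ℕ → Fin n) => P.iProd (pathEntry M i j q.1 q.2)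

/-- `P_k`: the sequences of states (states `1,…,n` being represented by `Fin n`,
state `j+1` by `j : Fin n`) that are `≤ k` (i.e. have representative `< k`)
infinitely often — the Büchi condition with repeated states `{1, …, k}`. -/
def InPk (n k : ℕ) (js : ℕ → Fin n) : Prop := ∀ N : ℕ, ∃ t, N ≤ t ∧ (js t : ℕ) < k

/-- The block `(M^{ω,k})_{p^i}` of the column vector `M^{ω,k} ∈ (V^n)^{p*}`:
the sum over all infinite sequences `i₁, i₂, … ≥ 1` of pushdown contents and all
state sequences in `P_k` of the infinite products of the corresponding entries. -/
def mOmegaK {S V : Type} (P : CPOps S V) {n : ℕ} (M : IMat n S) (k : ℕ) (i : ℕ) :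
    Fin n → V :=
  fun j => P.vSum fun q : {q : (ℕ → ℕ) × (ℕ → Fin n) // (∀ t, 1 ≤ q.1 t) ∧ InPk n k q.2} =>
    P.iProd (pathEntry M i j q.1.1 q.1.2)

/-! ### The algebraic systems -/

/-- The right-hand side `A x x + C x + B` of the algebraic system
`x = M_{p,p²} x x + M_{p,p} x + M_{p,ε}`. -/
def quadRhs {S : Type} (R : CSOps S) {n : ℕ} (Ablk Cblk Bblk X : Blk n S) : Blk n S :=
  bAdd R (bAdd R (bMul R Ablk (bMul R X X)) (bMul R Cblk X)) Bblk

/-- `X` is a solution of `x = A x x + C x + B`. -/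
def IsQuadSol {S : Type} (R : CSOps S) {n : ℕ} (Ablk Cblk Bblk X : Blk n S) : Prop :=
  X = quadRhs R Ablk Cblk Bblk X

/-- The matrix `M_{p,p²} + M_{p,p²}(M*)_{p,ε} + M_{p,p}`. -/
def linMat {S : Type} (R : CSOps S) {n : ℕ} (M : IMat n S) : Blk n S :=
  bAdd R (bAdd R (M 1 2) (bMul R (M 1 2) (iStar R M 1 0))) (M 1 1)

/-- `z` is a solution of the linear equation
`z = (M_{p,p²} + M_{p,p²}(M*)_{p,ε} + M_{p,p}) z` over `V^n`. -/
def IsLinSol {S V : Type} (R : CSOps S) (P : CPOps S V) {n : ℕ} (M : IMat n S)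
    (z : Fin n → V) : Prop :=
  z = matVec P (linMat R M) z

/-- The right-hand side `A z + (A x) z + C z` of the linear system
`z = M_{p,p²} z + M_{p,p²} x z + M_{p,p} z`. -/
def zRhs {S V : Type} (R : CSOps S) (P : CPOps S V) {n : ℕ} (Ablk Cblk x : Blk n S)
    (z : Fin n → V) : Fin n → V :=
  vecAdd P (vecAdd P (matVec P Ablk z) (matVec P (bMul R Ablk x) z)) (matVec P Cblk z)

/-- The behavior `‖C‖ = (I (M*)_{p,ε} P, I (M^{ω,k})_p)` of an
`ω`-restricted one-counter automaton. -/
def rocBehavior {S V : Type} (R : CSOps S) (P : CPOps S V) {n : ℕ} (M : IMat n S)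
    (Iv Pv : Fin n → S) (k : ℕ) : S × V :=
  (tripleProd R Iv (iStar R M 1 0) Pv, rowAct P Iv (mOmegaK P M k 1))

/-! ### Power series over finite and infinite words -/

open Classical in
/-- The complete semiring `S⟪Σ*⟫` of power series over finite words,
with the Cauchy product. -/
noncomputable def finOps {S : Type} (R : CSOps S) (A : Type) : CSOps (List A → S) where
  add s t := fun w => R.add (s w) (t w)
  mul s t := fun w =>
    R.iSum fun u : {u : List A × List A // u.1 ++ u.2 = w} => R.mul (s u.1.1) (t u.1.2)
  zero := fun _ => R.zero
  one := fun w => if w = [] then R.one else R.zero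
  iSum f := fun w => R.iSum fun i => f i w

/-- Concatenation of a finite word with an ω-word. -/
def wcat {A : Type} (u : List A) (v : ℕ → A) : ℕ → A :=
  fun t => if h : t < u.length then u.get ⟨t, h⟩ else v (t - u.length)

/-- Lengths of the partial concatenations of a sequence of finite words. -/
def flen {A : Type} (f : ℕ → List A) : ℕ → ℕ
  | 0 => 0
  | m + 1 => flen f m + (f m).length

/-- `f 0, f 1, f 2, …` is a factorization of the ω-word `w` into finite words:
the concatenation `f 0 · f 1 · ⋯` equals `w`. -/
def IsFact {A : Type} (f : ℕ → List A) (w : ℕ → A) : Prop :=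
  (∀ N : ℕ, ∃ m, N ≤ flen f m) ∧
  (∀ (m i : ℕ) (h : i < (f m).length), (f m).get ⟨i, h⟩ = w (flen f m + i))

/-- The complete semimodule pair operations on `(S⟪Σ*⟫, S⟪Σ^ω⟫)`, for a complete
star-omega semiring `S` given by `R` (sums) and `P0` (the infinite product of
the complete semiring-semimodule pair `(S, S)`). -/
def omOps {S : Type} (R : CSOps S) (P0 : CPOps S S) (A : Type) :
    CPOps (List A → S) ((ℕ → A) → S) where
  vadd s t := fun w => R.add (s w) (t w)
  vzero := fun _ => R.zero
  smul s t := fun w =>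
    R.iSum fun u : {u : List A × (ℕ → A) // wcat u.1 u.2 = w} => R.mul (s u.1.1) (t u.1.2)
  vSum f := fun w => R.iSum fun i => f i w
  iProd s := fun w =>
    R.iSum fun f : {f : ℕ → List A // IsFact f w} => P0.iProd fun j => s j (f.1 j)

/-- A series is a polynomial supported on `Σ ∪ {ε}`, i.e. an element of
`S⟨Σ ∪ {ε}⟩`: its coefficients vanish on words of length `≥ 2`. -/
def PolySupp {S : Type} (R : CSOps S) {A : Type} (s : List A → S) : Prop :=
  ∀ w : List A, 2 ≤ w.length → s w = R.zero

/-! ### The mixed context-free grammar of the triple-pair construction -/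

/-- Variables for finite derivations: `x₀` and the triples `[i, p, j]`. -/
inductive XVar (n : ℕ) where
  | x0 : XVar n
  | tr : Fin n → Fin n → XVar n

/-- Variables for infinite derivations: `z₀` and the pairs `[i, p]`. -/
inductive ZVar (n : ℕ) where
  | z0 : ZVar n
  | pr : Fin n → ZVar n

/-- Sentential forms over the variables for finite derivations and terminals. -/
abbrev SForm (n : ℕ) (A : Type) := List (XVar n ⊕ A)

/-- The productions `P_X` for finite derivations of the grammar `G_k`
constructed from a roc automaton with matrix blocks `M`, initial vector `Iv`
and final vector `Pv` (here `a, b` range over `Σ ∪ {ε}`, represented by words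
of length at most one). -/
inductive XProd {K : Type} (R : CSOps K) {n : ℕ} {A : Type} (M : IMat n (List A → K))
    (Iv Pv : Fin n → List A → K) : XVar n → SForm n A → Prop where
  | start (a b : List A) (m₁ m₂ : Fin n) : a.length ≤ 1 → b.length ≤ 1 →
      R.mul (Iv m₁ a) (Pv m₂ b) ≠ R.zero →
      XProd R M Iv Pv XVar.x0 (a.map Sum.inr ++ Sum.inl (XVar.tr m₁ m₂) :: b.map Sum.inr)
  | push (a : List A) (i j m₁ m₂ : Fin n) : a.length ≤ 1 → M 1 2 i m₁ a ≠ R.zero →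
      XProd R M Iv Pv (XVar.tr i j)
        (a.map Sum.inr ++ [Sum.inl (XVar.tr m₁ m₂), Sum.inl (XVar.tr m₂ j)])
  | stay (a : List A) (i j m : Fin n) : a.length ≤ 1 → M 1 1 i m a ≠ R.zero →
      XProd R M Iv Pv (XVar.tr i j) (a.map Sum.inr ++ [Sum.inl (XVar.tr m j)])
  | pop (a : List A) (i j : Fin n) : a.length ≤ 1 → M 1 0 i j a ≠ R.zero →
      XProd R M Iv Pv (XVar.tr i j) (a.map Sum.inr)

/-- The productions `P_Z` for infinite derivations: `ZProd R M Iv W α m` states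
that `W → α [m, p]` is a production, where `α` is the part of the right-hand
side over `X ∪ Σ` and `[m, p]` is the trailing variable for infinite derivations. -/
inductive ZProd {K : Type} (R : CSOps K) {n : ℕ} {A : Type} (M : IMat n (List A → K))
    (Iv : Fin n → List A → K) : ZVar n → SForm n A → Fin n → Prop where
  | init (a : List A) (m : Fin n) : a.length ≤ 1 → Iv m a ≠ R.zero →
      ZProd R M Iv ZVar.z0 (a.map Sum.inr) m
  | push (a : List A) (i m : Fin n) : a.length ≤ 1 → M 1 2 i m a ≠ R.zero →
      ZProd R M Iv (ZVar.pr i) (a.map Sum.inr) m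
  | pushTr (a : List A) (i m₁ m₂ : Fin n) : a.length ≤ 1 → M 1 2 i m₁ a ≠ R.zero →
      ZProd R M Iv (ZVar.pr i) (a.map Sum.inr ++ [Sum.inl (XVar.tr m₁ m₂)]) m₂
  | stay (a : List A) (i m : Fin n) : a.length ≤ 1 → M 1 1 i m a ≠ R.zero →
      ZProd R M Iv (ZVar.pr i) (a.map Sum.inr) m

/-- One leftmost derivation step: the leftmost variable is rewritten. -/
inductive LMStep {n : ℕ} {A : Type} (Px : XVar n → SForm n A → Prop) :
    SForm n A → SForm n A → Prop where
  | mk (u : List A) (X : XVar n) (β rest : SForm n A) : Px X β →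
      LMStep Px (u.map Sum.inr ++ Sum.inl X :: rest) (u.map Sum.inr ++ (β ++ rest))

/-- The finite-word part of the language of the grammar:
`{w ∈ Σ* | x₀ ⇒_L^* w}`. -/
def FinLang {K : Type} (R : CSOps K) {n : ℕ} {A : Type} (M : IMat n (List A → K))
    (Iv Pv : Fin n → List A → K) : Set (List A) :=
  {w | Relation.ReflTransGen (LMStep (XProd R M Iv Pv)) [Sum.inl XVar.x0] (w.map Sum.inr)}

/-- The set of finite leftmost derivations of the word `w` from `x₀`: lists of
sentential forms beginning with `x₀`, ending with `w`, each step being a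
leftmost rewriting by a production of `P_X`. -/
def finDerivSet {K : Type} (R : CSOps K) {n : ℕ} {A : Type} (M : IMat n (List A → K))
    (Iv Pv : Fin n → List A → K) (w : List A) : Set (List (SForm n A)) :=
  {l | l.Chain' (LMStep (XProd R M Iv Pv)) ∧ l.head? = some [Sum.inl XVar.x0] ∧
       l.getLast? = some (w.map Sum.inr)}

/-- The leftmost variable of a sentential form (the one rewritten in a leftmost
derivation step). -/
def leftVar {n : ℕ} {A : Type} (α : SForm n A) : Option (XVar n) :=
  (α.filterMap Sum.getLeft?).head?

/-- An infinite (leftmost) derivation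
`z₀ ⇒_L α₀[i₀,p] ⇒_L^* w₀[i₀,p] ⇒_L w₀α₁[i₁,p] ⇒_L^* w₀w₁[i₁,p] ⇒_L ⋯`:
the data of the states `i₀, i₁, …`, the sentential forms `α₀, α₁, …`, the
produced finite words `w₀, w₁, …` and the finite leftmost derivations
`α_m ⇒_L^* w_m`. -/
structure InfDeriv {K : Type} (R : CSOps K) {n : ℕ} {A : Type} (M : IMat n (List A → K))
    (Iv Pv : Fin n → List A → K) where
  iseq : ℕ → Fin n
  alph : ℕ → SForm n A
  wseq : ℕ → List A
  fder : ℕ → List (SForm n A)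
  hz0 : ZProd R M Iv ZVar.z0 (alph 0) (iseq 0)
  hz : ∀ m, ZProd R M Iv (ZVar.pr (iseq m)) (alph (m + 1)) (iseq (m + 1))
  hchain : ∀ m, (fder m).Chain' (LMStep (XProd R M Iv Pv))
  hhead : ∀ m, (fder m).head? = some (alph m)
  hlast : ∀ m, (fder m).getLast? = some ((wseq m).map Sum.inr)

/-- The infinite derivation produces the ω-word `w = w₀ w₁ w₂ ⋯`. -/
def InfDeriv.Produces {K : Type} {R : CSOps K} {n : ℕ} {A : Type}
    {M : IMat n (List A → K)} {Iv Pv : Fin n → List A → K}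
    (d : InfDeriv R M Iv Pv) (w : ℕ → A) : Prop :=
  IsFact d.wseq w

/-- The Büchi condition of an `(ω,k)`-derivation: the sequence of first
components of the variables rewritten (`i₀, i₁^1, …, i₁^{t₁}, i₁, i₂^1, …`)
lies in `P_k`, i.e. hits `{1, …, k}` (represented by `Fin`-values `< k`)
infinitely often. -/
def InfDeriv.Buchi {K : Type} {R : CSOps K} {n : ℕ} {A : Type}
    {M : IMat n (List A → K)} {Iv Pv : Fin n → List A → K}
    (d : InfDeriv R M Iv Pv) (k : ℕ) : Prop :=
  ∀ N : ℕ, ∃ m, N ≤ m ∧ ((d.iseq m : ℕ) < k ∨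
    ∃ α ∈ (d.fder m).dropLast, ∃ i j : Fin n,
      leftVar α = some (XVar.tr i j) ∧ (i : ℕ) < k)

/-- The infinite-word part of the language of the grammar `G_k`:
`{w ∈ Σ^ω | z₀ ⇒_L^{ω,k} w}`. -/
def InfLang {K : Type} (R : CSOps K) {n : ℕ} {A : Type} (M : IMat n (List A → K))
    (Iv Pv : Fin n → List A → K) (k : ℕ) : Set (ℕ → A) :=
  {w | ∃ d : InfDeriv R M Iv Pv, d.Produces w ∧ d.Buchi k}

/-! ### Computations of an ω-restricted one-counter automaton -/

/-- One computation step between instantaneous descriptions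
`(state, remaining input, counter)`. -/
def CompStep {K : Type} (R : CSOps K) {n : ℕ} {A : Type} (M : IMat n (List A → K)) :
    (Fin n × List A × ℕ) → (Fin n × List A × ℕ) → Prop := fun c c' =>
  ∃ a : List A, a.length ≤ 1 ∧ c.2.1 = a ++ c'.2.1 ∧ 1 ≤ c.2.2 ∧
    ((c'.2.2 = c.2.2 + 1 ∧ M 1 2 c.1 c'.1 a ≠ R.zero) ∨
     (c'.2.2 = c.2.2 ∧ M 1 1 c.1 c'.1 a ≠ R.zero) ∨
     (c'.2.2 + 1 = c.2.2 ∧ M 1 0 c.1 c'.1 a ≠ R.zero))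

/-- The set of finite computations on input `w`: from an initial instantaneous
description `(i, w, p)` with `I_i ≠ 0` to an accepting instantaneous
description `(j, ε, ε)` with `P_j ≠ 0`. -/
def finCompSet {K : Type} (R : CSOps K) {n : ℕ} {A : Type} (M : IMat n (List A → K))
    (Iv Pv : Fin n → List A → K) (w : List A) : Set (List (Fin n × List A × ℕ)) :=
  {l | l.Chain' (CompStep R M) ∧
       (∃ i : Fin n, Iv i ≠ (fun _ => R.zero) ∧ l.head? = some (i, w, 1)) ∧
       (∃ j : Fin n, Pv j ≠ (fun _ => R.zero) ∧ l.getLast? = some (j, [], 0))}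

/-- An infinite computation of the automaton starting in an initial
instantaneous description `(i, ·, p)` with `I_i ≠ 0`: the sequences of states,
counter values and read letters (`rd m ∈ Σ ∪ {ε}`). -/
structure InfComp {K : Type} (R : CSOps K) {n : ℕ} {A : Type} (M : IMat n (List A → K))
    (Iv : Fin n → List A → K) where
  st : ℕ → Fin n
  ct : ℕ → ℕ
  rd : ℕ → List A
  hI : Iv (st 0) ≠ fun _ => R.zero
  hct0 : ct 0 = 1
  hlen : ∀ m, (rd m).length ≤ 1
  hpos : ∀ m, 1 ≤ ct m
  hstep : ∀ m,
    (ct (m + 1) = ct m + 1 ∧ M 1 2 (st m) (st (m + 1)) (rd m) ≠ R.zero) ∨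
    (ct (m + 1) = ct m ∧ M 1 1 (st m) (st (m + 1)) (rd m) ≠ R.zero) ∨
    (ct (m + 1) + 1 = ct m ∧ M 1 0 (st m) (st (m + 1)) (rd m) ≠ R.zero)

/-- The infinite computation reads exactly the ω-word `w`. -/
def InfComp.Reads {K : Type} {R : CSOps K} {n : ℕ} {A : Type}
    {M : IMat n (List A → K)} {Iv : Fin n → List A → K}
    (d : InfComp R M Iv) (w : ℕ → A) : Prop :=
  IsFact d.rd w

/-- The infinite computation visits the repeated states `{1, …, k}` infinitely
often. -/
def InfComp.Buchi {K : Type} {R : CSOps K} {n : ℕ} {A : Type}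
    {M : IMat n (List A → K)} {Iv : Fin n → List A → K}
    (d : InfComp R M Iv) (k : ℕ) : Prop :=
  ∀ N : ℕ, ∃ m, N ≤ m ∧ (d.st m : ℕ) < k

/-! ### The complete star-omega semirings `𝔹` and `ℕ^∞` -/

open Classical in
/-- The complete semiring `𝔹 = ({0,1}, ∨, ∧, *, 0, 1)`. -/
noncomputable def boolCS : CSOps Bool where
  add a b := a || b
  mul a b := a && b
  zero := false
  one := true
  iSum f := decide (∃ i, f i = true)

open Classical in
/-- The complete semiring-semimodule pair `(𝔹, 𝔹)`, with the infinite product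
making `𝔹` a complete star-omega semiring. -/
noncomputable def boolCP : CPOps Bool Bool where
  vadd a b := a || b
  vzero := false
  smul a b := a && b
  vSum f := decide (∃ i, f i = true)
  iProd s := decide (∀ i, s i = true)

/-- The complete semiring `ℕ^∞ = (ℕ ∪ {∞}, +, ·, *, 0, 1)`: infinite sums are
the suprema of the finite partial sums. -/
noncomputable def enatCS : CSOps ℕ∞ where
  add a b := a + b
  mul a b := a * b
  zero := 0
  one := 1
  iSum {ι} f := ⨆ F : Finset ι, ∑ i ∈ F, f i

open Classical in
/-- The complete semiring-semimodule pair `(ℕ^∞, ℕ^∞)`, with the infinite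
product making `ℕ^∞` a complete star-omega semiring. -/
noncomputable def enatCP : CPOps ℕ∞ ℕ∞ where
  vadd a b := a + b
  vzero := 0
  smul a b := a * b
  vSum {ι} f := ⨆ F : Finset ι, ∑ i ∈ F, f i
  iProd s := if ∃ i, s i = 0 then 0 else ⨆ m : ℕ, ∏ i ∈ Finset.range m, s i

namespace Roc

open CSOps

variable {S : Type} {R : CSOps S}

lemma add_zero' (hR : R.IsComplete) (a : S) : R.add a R.zero = a := by
  rw [hR.add_comm, hR.zero_add]

lemma iSum_reindex (hR : R.IsComplete) {ι κ : Type} (e : ι ≃ κ) (f : κ → S) :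
    R.iSum f = R.iSum (fun i => f (e i)) := by
  calc R.iSum f
      = R.iSum (fun j : κ => R.iSum (fun i : {i : ι // e i = j} => f (e i.1))) := by
        congr 1
        funext j
        rw [hR.iSum_single (fun i : {i : ι // e i = j} => f (e i.1))
          ⟨e.symm j, e.apply_symm_apply j⟩ ?_]
        · simp
        · rintro ⟨x, hx⟩
          apply Subtype.ext
          simpa using congrArg e.symm hx
    _ = R.iSum (fun i => f (e i)) := hR.iSum_partition e (fun i => f (e i))

lemma iSum_zero (hR : R.IsComplete) (ι : Type) : R.iSum (fun _ : ι => R.zero) = R.zero := by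
  have h := hR.mul_iSum (ι := ι) R.zero (fun _ => R.one)
  simp only [hR.zero_mul] at h
  exact h.symm

lemma iSum_eq_zero (hR : R.IsComplete) {ι : Type} {f : ι → S} (h : ∀ i, f i = R.zero) :
    R.iSum f = R.zero := by
  rw [show f = fun _ => R.zero from funext h]
  exact iSum_zero hR ι

lemma iSum_split (hR : R.IsComplete) {ι : Type} (f : ι → S) (P : ι → Prop) :
    R.iSum f = R.add (R.iSum fun i : {i // P i} => f i.1)
                      (R.iSum fun i : {i // ¬ P i} => f i.1) := by
  classical
  have h := hR.iSum_partition (fun i => decide (P i)) f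
  rw [← h, hR.iSum_pair _ true false (by simp) (fun b => by cases b <;> simp)]
  let e₁ : {i // P i} ≃ {i // decide (P i) = true} :=
    ⟨fun x => ⟨x.1, by simpa using x.2⟩, fun x => ⟨x.1, by simpa using x.2⟩,
      fun x => rfl, fun x => rfl⟩
  let e₂ : {i // ¬ P i} ≃ {i // decide (P i) = false} :=
    ⟨fun x => ⟨x.1, by simpa using x.2⟩, fun x => ⟨x.1, by simpa using x.2⟩,
      fun x => rfl, fun x => rfl⟩
  rw [iSum_reindex hR e₁ (fun i : {i // decide (P i) = true} => f i.1),
      iSum_reindex hR e₂ (fun i : {i // decide (P i) = false} => f i.1)]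
  rfl

lemma single_sum (hR : R.IsComplete) {ι : Type} (f : ι → S) (i₀ : ι)
    (h : ∀ i, i ≠ i₀ → f i = R.zero) : R.iSum f = f i₀ := by
  rw [iSum_split hR f (fun i => i = i₀)]
  rw [hR.iSum_single (fun i : {i // i = i₀} => f i.1) ⟨i₀, rfl⟩
    (fun x => Subtype.ext x.2)]
  rw [iSum_eq_zero hR (fun x : {i // ¬ i = i₀} => h x.1 x.2)]
  exact add_zero' hR _

lemma triple_sum (hR : R.IsComplete) (f : ℕ → S) (q : ℕ)
    (h : ∀ l, l ≠ q + 2 → l ≠ q + 1 → l ≠ q → f l = R.zero) :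
    R.iSum f = R.add (f (q + 2)) (R.add (f (q + 1)) (f q)) := by
  rw [iSum_split hR f (fun l => l = q + 2)]
  rw [hR.iSum_single (fun i : {l // l = q + 2} => f i.1) ⟨q + 2, rfl⟩
    (fun x => Subtype.ext x.2)]
  congr 1
  rw [iSum_split hR (fun x : {l // ¬ l = q + 2} => f x.1)
    (fun x : {l // ¬ l = q + 2} => x.1 = q + 1)]
  have hq1 : ¬ (q + 1 = q + 2) := by omega
  rw [hR.iSum_single (fun x : {x : {l // ¬ l = q + 2} // x.1 = q + 1} => f x.1.1)
    ⟨⟨q + 1, hq1⟩, rfl⟩ (fun x => Subtype.ext (Subtype.ext x.2))]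
  congr 1
  rw [iSum_split hR (fun x : {x : {l // ¬ l = q + 2} // ¬ x.1 = q + 1} => f x.1.1)
    (fun x : {x : {l // ¬ l = q + 2} // ¬ x.1 = q + 1} => x.1.1 = q)]
  have hq2 : ¬ (q = q + 2) := by omega
  have hq3 : ¬ ((⟨q, hq2⟩ : {l // ¬ l = q + 2}).1 = q + 1) := by
    simp only []
    omega
  rw [hR.iSum_single
    (fun y : {y : {x : {l // ¬ l = q + 2} // ¬ x.1 = q + 1} // y.1.1 = q} => f y.1.1.1)
    ⟨⟨⟨q, hq2⟩, hq3⟩, rfl⟩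
    (fun x => Subtype.ext (Subtype.ext (Subtype.ext x.2)))]
  rw [iSum_eq_zero hR
    (f := fun y : {y : {x : {l // ¬ l = q + 2} // ¬ x.1 = q + 1} // ¬ y.1.1 = q} => f y.1.1.1)
    (fun x => h x.1.1.1 x.1.1.2 x.1.2 x.2)]
  exact add_zero' hR _

lemma iSum_prod (hR : R.IsComplete) {ι κ : Type} (f : ι → κ → S) :
    R.iSum (fun p : ι × κ => f p.1 p.2) = R.iSum fun i => R.iSum fun j => f i j := by
  rw [← hR.iSum_partition (Prod.fst : ι × κ → ι) (fun p => f p.1 p.2)]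
  congr 1
  funext i
  let e : κ ≃ {p : ι × κ // p.1 = i} :=
    ⟨fun j => ⟨(i, j), rfl⟩, fun x => x.1.2, fun j => rfl,
      fun x => by obtain ⟨⟨a, b⟩, h⟩ := x; subst h; rfl⟩
  rw [iSum_reindex hR e (fun p : {p : ι × κ // p.1 = i} => f p.1.1 p.1.2)]
  rfl

lemma iSum_swap (hR : R.IsComplete) {ι κ : Type} (f : ι → κ → S) :
    R.iSum (fun i => R.iSum fun j => f i j) = R.iSum (fun j => R.iSum fun i => f i j) := by
  rw [← iSum_prod hR f, ← iSum_prod hR (fun j i => f i j),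
      iSum_reindex hR (Equiv.prodComm κ ι) (fun p : ι × κ => f p.1 p.2)]
  rfl

lemma iSum_add (hR : R.IsComplete) {ι : Type} (f g : ι → S) :
    R.iSum (fun i => R.add (f i) (g i)) = R.add (R.iSum f) (R.iSum g) := by
  have h1 : R.iSum (fun p : ι × Bool => cond p.2 (f p.1) (g p.1))
      = R.iSum (fun i => R.add (f i) (g i)) := by
    rw [iSum_prod hR (fun i b => cond b (f i) (g i))]
    congr 1
    funext i
    exact hR.iSum_pair _ true false (by simp) (fun b => by cases b <;> simp)
  have h2 : R.iSum (fun p : ι × Bool => cond p.2 (f p.1) (g p.1))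
      = R.add (R.iSum f) (R.iSum g) := by
    calc R.iSum (fun p : ι × Bool => cond p.2 (f p.1) (g p.1))
        = R.iSum (fun p : Bool × ι => cond p.1 (f p.2) (g p.2)) :=
          iSum_reindex hR (Equiv.prodComm Bool ι) (fun p : ι × Bool => cond p.2 (f p.1) (g p.1))
      _ = R.iSum (fun b : Bool => R.iSum fun i => cond b (f i) (g i)) :=
          iSum_prod hR (fun (b : Bool) i => cond b (f i) (g i))
      _ = R.add (R.iSum f) (R.iSum g) :=
          hR.iSum_pair _ true false (by simp) (fun b => by cases b <;> simp)
  rw [← h1, h2]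

end Roc

namespace Roc

open CSOps

variable {S : Type} {R : CSOps S} {n : ℕ}

/-! ### Block lemmas -/

lemma bMul_zero_left_ap (hR : R.IsComplete) (X : Blk n S) (a b : Fin n) :
    bMul R (bZero R) X a b = R.zero :=
  iSum_eq_zero hR (fun l => hR.zero_mul _)

lemma bMul_zero_right_ap (hR : R.IsComplete) (X : Blk n S) (a b : Fin n) :
    bMul R X (bZero R) a b = R.zero :=
  iSum_eq_zero hR (fun l => hR.mul_zero _)

lemma bMul_one_left (hR : R.IsComplete) (X : Blk n S) : bMul R (bOne R) X = X := by
  funext a b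
  show R.iSum (fun l => R.mul (if a = l then R.one else R.zero) (X l b)) = X a b
  rw [single_sum hR _ a (fun l hl => by rw [if_neg (fun hc => hl hc.symm), hR.zero_mul])]
  rw [if_pos rfl, hR.one_mul]

lemma bMul_add_right (hR : R.IsComplete) (X Y Z : Blk n S) :
    bMul R (bAdd R X Y) Z = bAdd R (bMul R X Z) (bMul R Y Z) := by
  funext a b
  show R.iSum (fun l => R.mul (R.add (X a l) (Y a l)) (Z l b)) = _
  calc R.iSum (fun l => R.mul (R.add (X a l) (Y a l)) (Z l b))
      = R.iSum (fun l => R.add (R.mul (X a l) (Z l b)) (R.mul (Y a l) (Z l b))) := by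
        congr 1; funext l; exact hR.right_distrib _ _ _
    _ = R.add (bMul R X Z a b) (bMul R Y Z a b) := iSum_add hR _ _

lemma bMul_assoc (hR : R.IsComplete) (X Y Z : Blk n S) :
    bMul R (bMul R X Y) Z = bMul R X (bMul R Y Z) := by
  funext a b
  show R.iSum (fun l => R.mul (R.iSum fun k => R.mul (X a k) (Y k l)) (Z l b))
      = R.iSum (fun k => R.mul (X a k) (R.iSum fun l => R.mul (Y k l) (Z l b)))
  calc R.iSum (fun l => R.mul (R.iSum fun k => R.mul (X a k) (Y k l)) (Z l b))
      = R.iSum (fun l => R.iSum fun k => R.mul (R.mul (X a k) (Y k l)) (Z l b)) := by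
        congr 1; funext l; exact hR.iSum_mul _ _
    _ = R.iSum (fun k => R.iSum fun l => R.mul (R.mul (X a k) (Y k l)) (Z l b)) :=
        iSum_swap hR _
    _ = R.iSum (fun k => R.mul (X a k) (R.iSum fun l => R.mul (Y k l) (Z l b))) := by
        congr 1; funext k
        rw [hR.mul_iSum]
        congr 1; funext l
        exact hR.mul_assoc _ _ _

lemma bMul_iSum_right_ap (hR : R.IsComplete) {ι : Type} (X : Blk n S) (F : ι → Blk n S)
    (a b : Fin n) :
    R.iSum (fun i => bMul R X (F i) a b)
      = bMul R X (fun a b => R.iSum fun i => F i a b) a b := by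
  show R.iSum (fun i => R.iSum fun l => R.mul (X a l) (F i l b))
      = R.iSum (fun l => R.mul (X a l) (R.iSum fun i => F i l b))
  rw [iSum_swap hR]
  congr 1; funext l
  exact (hR.mul_iSum _ _).symm

end Roc

namespace Roc

open CSOps

variable {S : Type} {R : CSOps S} {n : ℕ}

/-! ### Roc matrix lemmas -/

lemma pow_succ_ap (M : IMat n S) (m q : ℕ) (a b : Fin n) :
    iMatPow R M (m + 1) q 0 a b
      = R.iSum (fun l : ℕ => bMul R (M q l) (iMatPow R M m l 0) a b) := rfl

lemma pow_zero_blk (M : IMat n S) (q : ℕ) :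
    iMatPow R M 0 q 0 = if q = 0 then bOne R else bZero R := rfl

lemma pow_succ_zero (hR : R.IsComplete) (M : IMat n S) (hM : IsRoc R M) (m : ℕ) :
    iMatPow R M (m + 1) 0 0 = bZero R := by
  funext a b
  rw [pow_succ_ap]
  apply iSum_eq_zero hR
  intro l
  rw [hM.2 0 l (Or.inl rfl)]
  exact bMul_zero_left_ap hR _ a b

/-- Expansion of one step of the power at a level `q + 1 ≥ 1`. -/
lemma expand (hR : R.IsComplete) (M : IMat n S) (hM : IsRoc R M) (q m : ℕ) :
    iMatPow R M (m + 1) (q + 1) 0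
      = bAdd R (bMul R (M 1 2) (iMatPow R M m (q + 2) 0))
          (bAdd R (bMul R (M 1 1) (iMatPow R M m (q + 1) 0))
            (bMul R (M 1 0) (iMatPow R M m q 0))) := by
  funext a b
  rw [pow_succ_ap]
  rw [triple_sum hR _ q (fun l h2 h1 h0 => by
    rw [hM.2 (q + 1) l (Or.inr ⟨by omega, by omega, by omega⟩)]
    exact bMul_zero_left_ap hR _ a b)]
  obtain ⟨hA, hC, hB⟩ := hM.1 (q + 1) (by omega)
  simp only [Nat.add_sub_cancel] at hB
  rw [hA, hC, hB]
  rfl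

/-- The convolution `Σ_{k+j=m} (M^k)_{r,0} (M^j)_{i,0}`. -/
def conv (R : CSOps S) (M : IMat n S) (r i m : ℕ) : Blk n S :=
  fun a b => R.iSum fun p : {p : ℕ × ℕ // p.1 + p.2 = m} =>
    bMul R (iMatPow R M p.1.1 r 0) (iMatPow R M p.1.2 i 0) a b

def shiftEquiv (m : ℕ) :
    {q : ℕ × ℕ // q.1 + q.2 = m} ≃ {p : {p : ℕ × ℕ // p.1 + p.2 = m + 1} // ¬ p.1.1 = 0} where
  toFun q := ⟨⟨(q.1.1 + 1, q.1.2), by omega⟩, by simp⟩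
  invFun p := ⟨(p.1.1.1 - 1, p.1.1.2), by
    obtain ⟨⟨⟨k, j⟩, hkj⟩, hk⟩ := p
    simp only at hk ⊢
    omega⟩
  left_inv q := by
    obtain ⟨⟨k, j⟩, h⟩ := q
    apply Subtype.ext
    simp
  right_inv p := by
    obtain ⟨⟨⟨k, j⟩, hkj⟩, hk⟩ := p
    have hk' : ¬ k = 0 := hk
    apply Subtype.ext
    apply Subtype.ext
    show (k - 1 + 1, j) = (k, j)
    have hk1 : k - 1 + 1 = k := by omega
    rw [hk1]

/-- First-passage decomposition: `Σ_{k+j=m} (M^k)_{r,0} (M^j)_{i,0} = (M^m)_{i+r,0}`. -/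
lemma conv_eq (hR : R.IsComplete) (M : IMat n S) (hM : IsRoc R M) (m : ℕ) :
    ∀ r i : ℕ, conv R M r i m = iMatPow R M m (i + r) 0 := by
  induction m with
  | zero =>
    intro r i
    funext a b
    show R.iSum (fun p : {p : ℕ × ℕ // p.1 + p.2 = 0} =>
      bMul R (iMatPow R M p.1.1 r 0) (iMatPow R M p.1.2 i 0) a b) = _
    rw [hR.iSum_single _ (⟨(0, 0), rfl⟩ : {p : ℕ × ℕ // p.1 + p.2 = 0})
      (fun p => by
        obtain ⟨⟨k, j⟩, h⟩ := p
        have h' : k + j = 0 := h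
        apply Subtype.ext
        show (k, j) = (0, 0)
        have hk : k = 0 := by omega
        have hj : j = 0 := by omega
        rw [hk, hj])]
    by_cases hr : r = 0
    · by_cases hi : i = 0
      · subst hr; subst hi
        show bMul R (bOne R) (bOne R) a b = bOne R a b
        rw [bMul_one_left hR]
      · subst hr
        show bMul R (bOne R) (iMatPow R M 0 i 0) a b = iMatPow R M 0 (i + 0) 0 a b
        rw [bMul_one_left hR, pow_zero_blk, pow_zero_blk,
          if_neg hi, if_neg (show ¬ i + 0 = 0 by omega)]
    · show bMul R (iMatPow R M 0 r 0) (iMatPow R M 0 i 0) a b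
          = iMatPow R M 0 (i + r) 0 a b
      rw [pow_zero_blk M r, pow_zero_blk M (i + r), if_neg hr,
        if_neg (show ¬ i + r = 0 by omega)]
      exact bMul_zero_left_ap hR _ a b
  | succ m IH =>
    intro r i
    match r with
    | 0 =>
      funext a b
      show R.iSum (fun p : {p : ℕ × ℕ // p.1 + p.2 = m + 1} =>
        bMul R (iMatPow R M p.1.1 0 0) (iMatPow R M p.1.2 i 0) a b) = _
      rw [single_sum hR _ (⟨(0, m + 1), by simp⟩ : {p : ℕ × ℕ // p.1 + p.2 = m + 1})
        (fun p hp => by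
          obtain ⟨⟨k, j⟩, h⟩ := p
          match k with
          | 0 =>
            have h' : 0 + j = m + 1 := h
            have hj : j = m + 1 := by omega
            subst hj
            exact absurd (Subtype.ext rfl) hp
          | k' + 1 =>
            rw [pow_succ_zero hR M hM k']
            exact bMul_zero_left_ap hR _ a b)]
      show bMul R (iMatPow R M 0 0 0) (iMatPow R M (m + 1) i 0) a b = _
      rw [show iMatPow R M 0 0 0 = bOne R from rfl, bMul_one_left hR]
      rfl
    | r' + 1 =>
      funext a b
      show R.iSum (fun p : {p : ℕ × ℕ // p.1 + p.2 = m + 1} =>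
        bMul R (iMatPow R M p.1.1 (r' + 1) 0) (iMatPow R M p.1.2 i 0) a b) = _
      rw [iSum_split hR _ (fun p : {p : ℕ × ℕ // p.1 + p.2 = m + 1} => p.1.1 = 0)]
      rw [iSum_eq_zero hR
        (f := fun p : {p : {p : ℕ × ℕ // p.1 + p.2 = m + 1} // p.1.1 = 0} =>
          bMul R (iMatPow R M p.1.1.1 (r' + 1) 0) (iMatPow R M p.1.1.2 i 0) a b)
        (fun p => by
          show bMul R (iMatPow R M p.1.1.1 (r' + 1) 0) (iMatPow R M p.1.1.2 i 0) a b = R.zero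
          rw [p.2, pow_zero_blk, if_neg (show ¬ r' + 1 = 0 by omega)]
          exact bMul_zero_left_ap hR _ a b)]
      rw [hR.zero_add]
      rw [iSum_reindex hR (shiftEquiv m)
        (fun p : {p : {p : ℕ × ℕ // p.1 + p.2 = m + 1} // ¬ p.1.1 = 0} =>
          bMul R (iMatPow R M p.1.1.1 (r' + 1) 0) (iMatPow R M p.1.1.2 i 0) a b)]
      have hterm : ∀ q : {q : ℕ × ℕ // q.1 + q.2 = m},
          bMul R (iMatPow R M (q.1.1 + 1) (r' + 1) 0) (iMatPow R M q.1.2 i 0) a b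
            = R.add (bMul R (M 1 2)
                (bMul R (iMatPow R M q.1.1 (r' + 2) 0) (iMatPow R M q.1.2 i 0)) a b)
              (R.add (bMul R (M 1 1)
                  (bMul R (iMatPow R M q.1.1 (r' + 1) 0) (iMatPow R M q.1.2 i 0)) a b)
                (bMul R (M 1 0)
                  (bMul R (iMatPow R M q.1.1 r' 0) (iMatPow R M q.1.2 i 0)) a b)) := by
        intro q
        rw [expand hR M hM r' q.1.1, bMul_add_right hR, bMul_add_right hR,
          bMul_assoc hR, bMul_assoc hR, bMul_assoc hR]
        rfl
      calc R.iSum (fun q : {q : ℕ × ℕ // q.1 + q.2 = m} =>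
              bMul R (iMatPow R M (q.1.1 + 1) (r' + 1) 0) (iMatPow R M q.1.2 i 0) a b)
          = R.add (R.iSum fun q : {q : ℕ × ℕ // q.1 + q.2 = m} =>
                bMul R (M 1 2)
                  (bMul R (iMatPow R M q.1.1 (r' + 2) 0) (iMatPow R M q.1.2 i 0)) a b)
              (R.add (R.iSum fun q : {q : ℕ × ℕ // q.1 + q.2 = m} =>
                  bMul R (M 1 1)
                    (bMul R (iMatPow R M q.1.1 (r' + 1) 0) (iMatPow R M q.1.2 i 0)) a b)
                (R.iSum fun q : {q : ℕ × ℕ // q.1 + q.2 = m} =>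
                  bMul R (M 1 0)
                    (bMul R (iMatPow R M q.1.1 r' 0) (iMatPow R M q.1.2 i 0)) a b)) := by
            rw [← iSum_add hR, ← iSum_add hR]
            congr 1
            funext q
            exact hterm q
        _ = R.add (bMul R (M 1 2) (conv R M (r' + 2) i m) a b)
              (R.add (bMul R (M 1 1) (conv R M (r' + 1) i m) a b)
                (bMul R (M 1 0) (conv R M r' i m) a b)) := by
            rw [bMul_iSum_right_ap hR (M 1 2)
                (fun q : {q : ℕ × ℕ // q.1 + q.2 = m} =>
                  bMul R (iMatPow R M q.1.1 (r' + 2) 0) (iMatPow R M q.1.2 i 0)) a b,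
              bMul_iSum_right_ap hR (M 1 1)
                (fun q : {q : ℕ × ℕ // q.1 + q.2 = m} =>
                  bMul R (iMatPow R M q.1.1 (r' + 1) 0) (iMatPow R M q.1.2 i 0)) a b,
              bMul_iSum_right_ap hR (M 1 0)
                (fun q : {q : ℕ × ℕ // q.1 + q.2 = m} =>
                  bMul R (iMatPow R M q.1.1 r' 0) (iMatPow R M q.1.2 i 0)) a b]
            rfl
        _ = R.add (bMul R (M 1 2) (iMatPow R M m (i + (r' + 2)) 0) a b)
              (R.add (bMul R (M 1 1) (iMatPow R M m (i + (r' + 1)) 0) a b)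
                (bMul R (M 1 0) (iMatPow R M m (i + r') 0) a b)) := by
            rw [IH (r' + 2) i, IH (r' + 1) i, IH r' i]
        _ = iMatPow R M (m + 1) (i + (r' + 1)) 0 a b := by
            rw [show i + (r' + 1) = (i + r') + 1 from rfl, expand hR M hM (i + r') m]
            rfl

end Roc


open Roc

/-- Let `S` be a complete starsemiring and `M` a roc matrix
over `S^{n×n}` with counter symbol `p`. Then for all `i ≥ 0`,
`(M*)_{p^{i+1},ε} = (M*)_{p,ε} · (M*)_{p^i,ε}`. -/
theorem stmt_0 {S : Type} (R : CSOps S) (hR : R.IsComplete) {n : ℕ} (hn : 1 ≤ n)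
    (M : IMat n S) (hM : IsRoc R M) (i : ℕ) :
    iStar R M (i + 1) 0 = bMul R (iStar R M 1 0) (iStar R M i 0) := by
  funext a b
  show R.iSum (fun m => iMatPow R M m (i + 1) 0 a b)
      = bMul R (iStar R M 1 0) (iStar R M i 0) a b
  have hRHS : bMul R (iStar R M 1 0) (iStar R M i 0) a b
      = R.iSum (fun l : Fin n => R.iSum fun k : ℕ => R.iSum fun j : ℕ =>
          R.mul (iMatPow R M k 1 0 a l) (iMatPow R M j i 0 l b)) := by
    show R.iSum (fun l : Fin n => R.mul (R.iSum fun k : ℕ => iMatPow R M k 1 0 a l)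
        (R.iSum fun j : ℕ => iMatPow R M j i 0 l b)) = _
    congr 1
    funext l
    rw [hR.iSum_mul]
    congr 1
    funext k
    rw [hR.mul_iSum]
  calc R.iSum (fun m => iMatPow R M m (i + 1) 0 a b)
      = R.iSum (fun m : ℕ => R.iSum (fun p : {p : ℕ × ℕ // p.1 + p.2 = m} =>
          bMul R (iMatPow R M p.1.1 1 0) (iMatPow R M p.1.2 i 0) a b)) := by
        congr 1
        funext m
        rw [← conv_eq hR M hM m 1 i]
        rfl
    _ = R.iSum (fun p : ℕ × ℕ => bMul R (iMatPow R M p.1 1 0) (iMatPow R M p.2 i 0) a b) :=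
        hR.iSum_partition (fun p : ℕ × ℕ => p.1 + p.2)
          (fun p : ℕ × ℕ => bMul R (iMatPow R M p.1 1 0) (iMatPow R M p.2 i 0) a b)
    _ = R.iSum (fun l : Fin n => R.iSum fun p : ℕ × ℕ =>
          R.mul (iMatPow R M p.1 1 0 a l) (iMatPow R M p.2 i 0 l b)) :=
        iSum_swap hR (fun p : ℕ × ℕ => fun l : Fin n =>
          R.mul (iMatPow R M p.1 1 0 a l) (iMatPow R M p.2 i 0 l b))
    _ = R.iSum (fun l : Fin n => R.iSum fun k : ℕ => R.iSum fun j : ℕ =>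
          R.mul (iMatPow R M k 1 0 a l) (iMatPow R M j i 0 l b)) := by
        congr 1
        funext l
        exact iSum_prod hR (fun k j => R.mul (iMatPow R M k 1 0 a l) (iMatPow R M j i 0 l b))
    _ = bMul R (iStar R M 1 0) (iStar R M i 0) a b := hRHS.symm
end

section
/- Let S be a complete starsemiring and let M be a restricted one-counter (roc) matrix over S^{n×n} with counter symbol p. Then for all i ≥ 0 one has (M*)_{p^i,ε} = ((M*)_{p,ε})^i, the i-th power of the n×n matrix (M*)_{p,ε}. -/
section Stmt1Aux

variable {S : Type} {R : CSOps S}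

lemma aux_iSum_zero (hR : R.IsComplete) {ι : Type} :
    R.iSum (fun _ : ι => R.zero) = R.zero := by
  have h := hR.mul_iSum R.zero (fun _ : ι => R.zero)
  rw [hR.zero_mul] at h
  have h2 : (fun i : ι => R.mul R.zero R.zero) = fun _ : ι => R.zero :=
    funext fun _ => hR.zero_mul _
  rw [h2] at h
  exact h.symm

lemma aux_iSum_reindex (hR : R.IsComplete) {ι κ : Type} (u : κ → ι) (v : ι → κ)
    (huv : ∀ k, v (u k) = k) (hvu : ∀ i, u (v i) = i) (f : ι → S) (g : κ → S)
    (hg : ∀ k, g k = f (u k)) :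
    R.iSum g = R.iSum f := by
  have h := hR.iSum_partition v f
  have h2 : ∀ j : κ, R.iSum (fun i : {i : ι // v i = j} => f i.1) = g j := by
    intro j
    have := hR.iSum_single (fun i : {i : ι // v i = j} => f i.1) ⟨u j, huv j⟩
      (fun x => Subtype.ext (by rw [← hvu x.1, x.2]))
    rw [this, hg j]
  simp only [h2] at h
  exact h

lemma aux_iSum_bool (hR : R.IsComplete) (f : Bool → S) :
    R.iSum f = R.add (f true) (f false) :=
  hR.iSum_pair f true false (by simp) (fun b => by cases b <;> simp)

lemma aux_boolSplit (hR : R.IsComplete) {ι : Type} (p : ι → Bool) (f : ι → S) :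
    R.iSum f = R.add (R.iSum fun i : {i : ι // p i = true} => f i.1)
                     (R.iSum fun i : {i : ι // p i = false} => f i.1) := by
  have h := hR.iSum_partition p f
  rw [← h, aux_iSum_bool hR]

open Classical in
lemma aux_split_single (hR : R.IsComplete) {ι : Type} (f : ι → S) (i₀ : ι) :
    R.iSum f = R.add (f i₀) (R.iSum fun i : {i : ι // i ≠ i₀} => f i.1) := by
  have h := aux_boolSplit hR (fun i => decide (i = i₀)) f
  have h1 : R.iSum (fun i : {i : ι // decide (i = i₀) = true} => f i.1) = f i₀ := by
    have := hR.iSum_single (fun i : {i : ι // decide (i = i₀) = true} => f i.1)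
      ⟨i₀, by simp⟩ (fun x => Subtype.ext (by simpa using x.2))
    rw [this]
  have h2 : R.iSum (fun i : {i : ι // i ≠ i₀} => f i.1)
      = R.iSum (fun i : {i : ι // decide (i = i₀) = false} => f i.1) :=
    aux_iSum_reindex hR (fun x : {i : ι // i ≠ i₀} => (⟨x.1, by simpa using x.2⟩ : {i : ι // decide (i = i₀) = false}))
      (fun x => ⟨x.1, by simpa using x.2⟩) (fun x => rfl) (fun x => rfl)
      (fun i : {i : ι // decide (i = i₀) = false} => f i.1)
      (fun i : {i : ι // i ≠ i₀} => f i.1) (fun k => rfl)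
  rw [h, h1, h2]

lemma aux_iSum_prod_fst (hR : R.IsComplete) {ι κ : Type} (f : ι × κ → S) :
    R.iSum f = R.iSum fun i : ι => R.iSum fun k : κ => f (i, k) := by
  have h := hR.iSum_partition (Prod.fst : ι × κ → ι) f
  rw [← h]
  have h2 : ∀ i : ι, R.iSum (fun p : {p : ι × κ // p.1 = i} => f p.1)
      = R.iSum fun k : κ => f (i, k) := by
    intro i
    exact (aux_iSum_reindex hR (fun k : κ => (⟨(i, k), rfl⟩ : {p : ι × κ // p.1 = i}))
      (fun p => p.1.2) (fun k => rfl)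
      (fun p => Subtype.ext (by
        obtain ⟨⟨a, b⟩, h⟩ := p
        cases h
        rfl))
      (fun p : {p : ι × κ // p.1 = i} => f p.1)
      (fun k : κ => f (i, k)) (fun k => rfl)).symm
  simp only [h2]

lemma aux_iSum_prod_snd (hR : R.IsComplete) {ι κ : Type} (f : ι × κ → S) :
    R.iSum f = R.iSum fun k : κ => R.iSum fun i : ι => f (i, k) := by
  have h := hR.iSum_partition (Prod.snd : ι × κ → κ) f
  rw [← h]
  have h2 : ∀ k : κ, R.iSum (fun p : {p : ι × κ // p.2 = k} => f p.1)
      = R.iSum fun i : ι => f (i, k) := by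
    intro k
    exact (aux_iSum_reindex hR (fun i : ι => (⟨(i, k), rfl⟩ : {p : ι × κ // p.2 = k}))
      (fun p => p.1.1) (fun i => rfl)
      (fun p => Subtype.ext (by
        obtain ⟨⟨a, b⟩, h⟩ := p
        cases h
        rfl))
      (fun p : {p : ι × κ // p.2 = k} => f p.1)
      (fun i : ι => f (i, k)) (fun i => rfl)).symm
  simp only [h2]

lemma aux_iSum_swap (hR : R.IsComplete) {ι κ : Type} (f : ι → κ → S) :
    R.iSum (fun i => R.iSum fun k => f i k) = R.iSum (fun k => R.iSum fun i => f i k) := by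
  rw [← aux_iSum_prod_fst hR (fun p : ι × κ => f p.1 p.2),
      aux_iSum_prod_snd hR (fun p : ι × κ => f p.1 p.2)]

lemma aux_iSum_add (hR : R.IsComplete) {ι : Type} (f g : ι → S) :
    R.iSum (fun i => R.add (f i) (g i)) = R.add (R.iSum f) (R.iSum g) := by
  have h2 : ∀ i, R.iSum (fun b : Bool => if b then f i else g i) = R.add (f i) (g i) :=
    fun i => hR.iSum_pair _ true false (by simp) (fun b => by cases b <;> simp)
  calc R.iSum (fun i => R.add (f i) (g i))
      = R.iSum (fun i => R.iSum fun b : Bool => if b then f i else g i) := by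
        simp only [h2]
    _ = R.iSum (fun b : Bool => R.iSum fun i => if b then f i else g i) :=
        aux_iSum_swap hR _
    _ = R.add (R.iSum f) (R.iSum g) := by
        rw [aux_iSum_bool hR]
        simp

end Stmt1Aux

section Stmt1Blk

variable {S : Type} {R : CSOps S} {n : ℕ}

lemma aux_bMul_zero_left (hR : R.IsComplete) (X : Blk n S) (a b : Fin n) :
    bMul R (bZero R) X a b = R.zero := by
  show R.iSum (fun l : Fin n => R.mul (bZero R a l) (X l b)) = R.zero
  have h : (fun l : Fin n => R.mul (bZero R a l) (X l b)) = fun _ => R.zero :=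
    funext fun l => hR.zero_mul _
  rw [h, aux_iSum_zero hR]

lemma aux_bMul_zero_right (hR : R.IsComplete) (X : Blk n S) (a b : Fin n) :
    bMul R X (bZero R) a b = R.zero := by
  show R.iSum (fun l : Fin n => R.mul (X a l) (bZero R l b)) = R.zero
  have h : (fun l : Fin n => R.mul (X a l) (bZero R l b)) = fun _ => R.zero :=
    funext fun l => hR.mul_zero _
  rw [h, aux_iSum_zero hR]

lemma aux_bMul_one_left (hR : R.IsComplete) (X : Blk n S) (a b : Fin n) :
    bMul R (bOne R) X a b = X a b := by
  show R.iSum (fun l : Fin n => R.mul (bOne R a l) (X l b)) = X a b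
  rw [aux_split_single hR (fun l : Fin n => R.mul (bOne R a l) (X l b)) a]
  have h1 : R.mul (bOne R a a) (X a b) = X a b := by
    show R.mul (if a = a then R.one else R.zero) (X a b) = X a b
    rw [if_pos rfl, hR.one_mul]
  have h2 : (fun l : {l : Fin n // l ≠ a} => R.mul (bOne R a l.1) (X l.1 b))
      = fun _ => R.zero := by
    funext l
    show R.mul (if a = l.1 then R.one else R.zero) (X l.1 b) = R.zero
    rw [if_neg (fun h => l.2 h.symm), hR.zero_mul]
  rw [h1, h2, aux_iSum_zero hR, hR.add_comm, hR.zero_add]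

lemma aux_bMul_one_right (hR : R.IsComplete) (X : Blk n S) (a b : Fin n) :
    bMul R X (bOne R) a b = X a b := by
  show R.iSum (fun l : Fin n => R.mul (X a l) (bOne R l b)) = X a b
  rw [aux_split_single hR (fun l : Fin n => R.mul (X a l) (bOne R l b)) b]
  have h1 : R.mul (X a b) (bOne R b b) = X a b := by
    show R.mul (X a b) (if b = b then R.one else R.zero) = X a b
    rw [if_pos rfl, hR.mul_one]
  have h2 : (fun l : {l : Fin n // l ≠ b} => R.mul (X a l.1) (bOne R l.1 b))
      = fun _ => R.zero := by
    funext l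
    show R.mul (X a l.1) (if l.1 = b then R.one else R.zero) = R.zero
    rw [if_neg l.2, hR.mul_zero]
  rw [h1, h2, aux_iSum_zero hR, hR.add_comm, hR.zero_add]

lemma aux_bMul_add_left (hR : R.IsComplete) (X Y Z : Blk n S) (a b : Fin n) :
    bMul R (bAdd R X Y) Z a b = R.add (bMul R X Z a b) (bMul R Y Z a b) := by
  show R.iSum (fun l : Fin n => R.mul (R.add (X a l) (Y a l)) (Z l b)) = _
  have h : (fun l : Fin n => R.mul (R.add (X a l) (Y a l)) (Z l b))
      = fun l => R.add (R.mul (X a l) (Z l b)) (R.mul (Y a l) (Z l b)) :=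
    funext fun l => hR.right_distrib _ _ _
  rw [h, aux_iSum_add hR]
  rfl

lemma aux_bMul_assoc (hR : R.IsComplete) (X Y Z : Blk n S) (a b : Fin n) :
    bMul R (bMul R X Y) Z a b = bMul R X (bMul R Y Z) a b := by
  show R.iSum (fun l : Fin n => R.mul (R.iSum fun c : Fin n => R.mul (X a c) (Y c l)) (Z l b))
     = R.iSum (fun c : Fin n => R.mul (X a c) (R.iSum fun l : Fin n => R.mul (Y c l) (Z l b)))
  calc R.iSum (fun l : Fin n => R.mul (R.iSum fun c : Fin n => R.mul (X a c) (Y c l)) (Z l b))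
      = R.iSum (fun l : Fin n => R.iSum fun c : Fin n =>
          R.mul (R.mul (X a c) (Y c l)) (Z l b)) := by
        have h : ∀ l : Fin n, R.mul (R.iSum fun c : Fin n => R.mul (X a c) (Y c l)) (Z l b)
            = R.iSum fun c : Fin n => R.mul (R.mul (X a c) (Y c l)) (Z l b) :=
          fun l => hR.iSum_mul _ _
        simp only [h]
    _ = R.iSum (fun c : Fin n => R.iSum fun l : Fin n =>
          R.mul (R.mul (X a c) (Y c l)) (Z l b)) := aux_iSum_swap hR _
    _ = R.iSum (fun c : Fin n => R.mul (X a c) (R.iSum fun l : Fin n =>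
          R.mul (Y c l) (Z l b))) := by
        have h : ∀ c : Fin n, R.iSum (fun l : Fin n => R.mul (R.mul (X a c) (Y c l)) (Z l b))
            = R.mul (X a c) (R.iSum fun l : Fin n => R.mul (Y c l) (Z l b)) := by
          intro c
          rw [hR.mul_iSum]
          have h2 : (fun l : Fin n => R.mul (R.mul (X a c) (Y c l)) (Z l b))
              = fun l => R.mul (X a c) (R.mul (Y c l) (Z l b)) :=
            funext fun l => hR.mul_assoc _ _ _
          rw [h2]
        simp only [h]

lemma aux_factor (hR : R.IsComplete) {ι : Type} (A : Blk n S) (T : ι → Blk n S) (a b : Fin n) :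
    R.iSum (fun q : ι => bMul R A (T q) a b)
      = bMul R A (fun c d => R.iSum fun q : ι => T q c d) a b := by
  show R.iSum (fun q : ι => R.iSum fun c : Fin n => R.mul (A a c) (T q c b))
     = R.iSum (fun c : Fin n => R.mul (A a c) (R.iSum fun q : ι => T q c b))
  rw [aux_iSum_swap hR]
  have h : ∀ c : Fin n, R.iSum (fun q : ι => R.mul (A a c) (T q c b))
      = R.mul (A a c) (R.iSum fun q : ι => T q c b) := fun c => (hR.mul_iSum _ _).symm
  simp only [h]

end Stmt1Blk

section Stmt1Main

variable {S : Type} {R : CSOps S} {n : ℕ}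

lemma aux_row0 (hR : R.IsComplete) (M : IMat n S) (hM : IsRoc R M) (m : ℕ) :
    iMatPow R M (m+1) 0 0 = bZero R := by
  funext a b
  show R.iSum (fun l : ℕ => bMul R (M 0 l) (iMatPow R M m l 0) a b) = bZero R a b
  have h : (fun l : ℕ => bMul R (M 0 l) (iMatPow R M m l 0) a b) = fun _ => R.zero := by
    funext l
    rw [hM.2 0 l (Or.inl rfl)]
    exact aux_bMul_zero_left hR _ a b
  rw [h, aux_iSum_zero hR]
  rfl

lemma aux_rec (hR : R.IsComplete) (M : IMat n S) (hM : IsRoc R M) (m i : ℕ) (hi : 1 ≤ i) :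
    iMatPow R M (m+1) i 0 = bAdd R (bMul R (M 1 2) (iMatPow R M m (i+1) 0))
      (bAdd R (bMul R (M 1 1) (iMatPow R M m i 0))
        (bMul R (M 1 0) (iMatPow R M m (i-1) 0))) := by
  funext a b
  have hne1 : (i : ℕ) ≠ i + 1 := by omega
  have hne2 : (i - 1 : ℕ) ≠ i + 1 := by omega
  have hne3 : (⟨i-1, hne2⟩ : {l : ℕ // l ≠ i+1}) ≠ ⟨i, hne1⟩ := by
    simp only [ne_eq, Subtype.mk.injEq]
    omega
  show R.iSum (fun l : ℕ => bMul R (M i l) (iMatPow R M m l 0) a b) = _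
  rw [aux_split_single hR (fun l : ℕ => bMul R (M i l) (iMatPow R M m l 0) a b) (i+1)]
  rw [aux_split_single hR
    (fun x : {l : ℕ // l ≠ i+1} => bMul R (M i x.1) (iMatPow R M m x.1 0) a b) ⟨i, hne1⟩]
  rw [aux_split_single hR
    (fun y : {x : {l : ℕ // l ≠ i+1} // x ≠ ⟨i, hne1⟩} =>
      bMul R (M i y.1.1) (iMatPow R M m y.1.1 0) a b) ⟨⟨i-1, hne2⟩, hne3⟩]
  have hz : (fun y : {y : {x : {l : ℕ // l ≠ i+1} // x ≠ ⟨i, hne1⟩} // y ≠ ⟨⟨i-1, hne2⟩, hne3⟩} =>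
      bMul R (M i y.1.1.1) (iMatPow R M m y.1.1.1 0) a b) = fun _ => R.zero := by
    funext y
    have c1 : y.1.1.1 ≠ i + 1 := y.1.1.2
    have c2 : y.1.1.1 ≠ i := fun hv => y.1.2 (Subtype.ext hv)
    have c3 : y.1.1.1 + 1 ≠ i := by
      intro hv
      apply y.2
      apply Subtype.ext
      apply Subtype.ext
      show y.1.1.1 = i - 1
      omega
    rw [hM.2 i y.1.1.1 (Or.inr ⟨c1, c2, c3⟩)]
    exact aux_bMul_zero_left hR _ a b
  rw [hz, aux_iSum_zero hR]
  show R.add (bMul R (M i (i+1)) (iMatPow R M m (i+1) 0) a b)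
      (R.add (bMul R (M i i) (iMatPow R M m i 0) a b)
        (R.add (bMul R (M i (i-1)) (iMatPow R M m (i-1) 0) a b) R.zero))
    = bAdd R (bMul R (M 1 2) (iMatPow R M m (i+1) 0))
        (bAdd R (bMul R (M 1 1) (iMatPow R M m i 0))
          (bMul R (M 1 0) (iMatPow R M m (i-1) 0))) a b
  rw [(hM.1 i hi).1, (hM.1 i hi).2.1, (hM.1 i hi).2.2]
  rw [hR.add_comm (bMul R (M 1 0) (iMatPow R M m (i-1) 0) a b) R.zero, hR.zero_add]
  rfl

lemma aux_key (hR : R.IsComplete) (M : IMat n S) (hM : IsRoc R M) :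
    ∀ (m i : ℕ) (a b : Fin n),
    R.iSum (fun q : {q : ℕ × ℕ // q.1 + q.2 = m} =>
      bMul R (iMatPow R M q.1.1 i 0) (iMatPow R M q.1.2 1 0) a b)
    = iMatPow R M m (i+1) 0 a b := by
  intro m
  induction m with
  | zero =>
    intro i a b
    have hone := hR.iSum_single (fun q : {q : ℕ × ℕ // q.1 + q.2 = 0} =>
        bMul R (iMatPow R M q.1.1 i 0) (iMatPow R M q.1.2 1 0) a b)
      ⟨(0, 0), rfl⟩ (fun x => Subtype.ext (by
        have h := x.2
        have h1 : x.1.1 = 0 := by omega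
        have h2 : x.1.2 = 0 := by omega
        calc x.1 = (x.1.1, x.1.2) := rfl
          _ = ((0 : ℕ), (0 : ℕ)) := by rw [h1, h2]))
    rw [hone]
    have hz : iMatPow R M 0 1 0 = bZero R := by
      show (if (1 : ℕ) = 0 then bOne R else bZero R) = bZero R
      rw [if_neg (by omega)]
    show bMul R (iMatPow R M 0 i 0) (iMatPow R M 0 1 0) a b = iMatPow R M 0 (i+1) 0 a b
    rw [hz, aux_bMul_zero_right hR]
    show R.zero = (if i + 1 = 0 then bOne R else bZero R) a b
    rw [if_neg (by omega)]
    rfl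
  | succ m IH =>
    intro i a b
    rw [aux_split_single hR (fun q : {q : ℕ × ℕ // q.1 + q.2 = m+1} =>
        bMul R (iMatPow R M q.1.1 i 0) (iMatPow R M q.1.2 1 0) a b)
      ⟨(0, m+1), Nat.zero_add (m+1)⟩]
    have hre : R.iSum (fun x : {x : {q : ℕ × ℕ // q.1 + q.2 = m+1} // x ≠ ⟨(0, m+1), Nat.zero_add (m+1)⟩} =>
          bMul R (iMatPow R M x.1.1.1 i 0) (iMatPow R M x.1.1.2 1 0) a b)
        = R.iSum (fun q : {q : ℕ × ℕ // q.1 + q.2 = m} =>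
          bMul R (iMatPow R M (q.1.1 + 1) i 0) (iMatPow R M q.1.2 1 0) a b) := by
      refine (aux_iSum_reindex hR
        (fun q : {q : ℕ × ℕ // q.1 + q.2 = m} =>
          (⟨⟨(q.1.1 + 1, q.1.2), by
            have hq := q.2
            show q.1.1 + 1 + q.1.2 = m + 1
            omega⟩, by
            intro hc
            have h' := congrArg (fun x : {q : ℕ × ℕ // q.1 + q.2 = m+1} => x.1.1) hc
            have h'' : q.1.1 + 1 = 0 := by simpa using h'
            omega⟩ :
            {x : {q : ℕ × ℕ // q.1 + q.2 = m+1} // x ≠ ⟨(0, m+1), Nat.zero_add (m+1)⟩}))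
        (fun x => ⟨(x.1.1.1 - 1, x.1.1.2), by
          have hx : x.1.1.1 ≠ 0 := by
            intro h0
            apply x.2
            apply Subtype.ext
            have h := x.1.2
            have h2 : x.1.1.2 = m + 1 := by omega
            show x.1.1 = ((0 : ℕ), m + 1)
            calc x.1.1 = (x.1.1.1, x.1.1.2) := rfl
              _ = ((0 : ℕ), m + 1) := by rw [h0, h2]
          have h := x.1.2
          show x.1.1.1 - 1 + x.1.1.2 = m
          omega⟩)
        (fun q => by
          apply Subtype.ext
          show (q.1.1 + 1 - 1, q.1.2) = q.1
          rw [Nat.add_sub_cancel])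
        (fun x => by
          apply Subtype.ext
          apply Subtype.ext
          have hx : x.1.1.1 ≠ 0 := by
            intro h0
            apply x.2
            apply Subtype.ext
            have h := x.1.2
            have h2 : x.1.1.2 = m + 1 := by omega
            show x.1.1 = ((0 : ℕ), m + 1)
            calc x.1.1 = (x.1.1.1, x.1.1.2) := rfl
              _ = ((0 : ℕ), m + 1) := by rw [h0, h2]
          show (x.1.1.1 - 1 + 1, x.1.1.2) = x.1.1
          have h3 : x.1.1.1 - 1 + 1 = x.1.1.1 := by omega
          rw [h3])
        (fun x : {x : {q : ℕ × ℕ // q.1 + q.2 = m+1} // x ≠ ⟨(0, m+1), Nat.zero_add (m+1)⟩} =>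
          bMul R (iMatPow R M x.1.1.1 i 0) (iMatPow R M x.1.1.2 1 0) a b)
        (fun q : {q : ℕ × ℕ // q.1 + q.2 = m} =>
          bMul R (iMatPow R M (q.1.1 + 1) i 0) (iMatPow R M q.1.2 1 0) a b)
        (fun q => rfl)).symm
    rw [hre]
    show R.add (bMul R (iMatPow R M 0 i 0) (iMatPow R M (m+1) 1 0) a b)
        (R.iSum (fun q : {q : ℕ × ℕ // q.1 + q.2 = m} =>
          bMul R (iMatPow R M (q.1.1 + 1) i 0) (iMatPow R M q.1.2 1 0) a b))
      = iMatPow R M (m+1) (i+1) 0 a b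
    cases i with
    | zero =>
      have h0 : iMatPow R M 0 0 0 = bOne R := by
        show (if (0 : ℕ) = 0 then bOne R else bZero R) = bOne R
        rw [if_pos rfl]
      rw [h0, aux_bMul_one_left hR]
      have hzz : (fun q : {q : ℕ × ℕ // q.1 + q.2 = m} =>
          bMul R (iMatPow R M (q.1.1 + 1) 0 0) (iMatPow R M q.1.2 1 0) a b)
          = fun _ => R.zero := by
        funext q
        rw [aux_row0 hR M hM q.1.1]
        exact aux_bMul_zero_left hR _ a b
      rw [hzz, aux_iSum_zero hR, hR.add_comm, hR.zero_add]
    | succ i' =>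
      have h0 : iMatPow R M 0 (i'+1) 0 = bZero R := by
        show (if i' + 1 = 0 then bOne R else bZero R) = bZero R
        rw [if_neg (by omega)]
      rw [h0, aux_bMul_zero_left hR, hR.zero_add]
      have hstep : (fun q : {q : ℕ × ℕ // q.1 + q.2 = m} =>
          bMul R (iMatPow R M (q.1.1 + 1) (i'+1) 0) (iMatPow R M q.1.2 1 0) a b)
        = fun q => R.add
            (bMul R (bMul R (M 1 2) (iMatPow R M q.1.1 (i'+1+1) 0)) (iMatPow R M q.1.2 1 0) a b)
            (R.add
              (bMul R (bMul R (M 1 1) (iMatPow R M q.1.1 (i'+1) 0)) (iMatPow R M q.1.2 1 0) a b)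
              (bMul R (bMul R (M 1 0) (iMatPow R M q.1.1 (i'+1-1) 0)) (iMatPow R M q.1.2 1 0) a b)) := by
        funext q
        rw [aux_rec hR M hM q.1.1 (i'+1) (by omega)]
        rw [aux_bMul_add_left hR, aux_bMul_add_left hR]
      rw [hstep, aux_iSum_add hR, aux_iSum_add hR]
      have hA : R.iSum (fun q : {q : ℕ × ℕ // q.1 + q.2 = m} =>
          bMul R (bMul R (M 1 2) (iMatPow R M q.1.1 (i'+1+1) 0)) (iMatPow R M q.1.2 1 0) a b)
          = bMul R (M 1 2) (iMatPow R M m (i'+1+1+1) 0) a b := by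
        have h1 : (fun q : {q : ℕ × ℕ // q.1 + q.2 = m} =>
            bMul R (bMul R (M 1 2) (iMatPow R M q.1.1 (i'+1+1) 0)) (iMatPow R M q.1.2 1 0) a b)
            = fun q => bMul R (M 1 2)
                (bMul R (iMatPow R M q.1.1 (i'+1+1) 0) (iMatPow R M q.1.2 1 0)) a b :=
          funext fun q => aux_bMul_assoc hR _ _ _ _ _
        rw [h1, aux_factor hR]
        have h2 : (fun c d => R.iSum fun q : {q : ℕ × ℕ // q.1 + q.2 = m} =>
            bMul R (iMatPow R M q.1.1 (i'+1+1) 0) (iMatPow R M q.1.2 1 0) c d)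
            = iMatPow R M m (i'+1+1+1) 0 :=
          funext fun c => funext fun d => IH (i'+1+1) c d
        rw [h2]
      have hC : R.iSum (fun q : {q : ℕ × ℕ // q.1 + q.2 = m} =>
          bMul R (bMul R (M 1 1) (iMatPow R M q.1.1 (i'+1) 0)) (iMatPow R M q.1.2 1 0) a b)
          = bMul R (M 1 1) (iMatPow R M m (i'+1+1) 0) a b := by
        have h1 : (fun q : {q : ℕ × ℕ // q.1 + q.2 = m} =>
            bMul R (bMul R (M 1 1) (iMatPow R M q.1.1 (i'+1) 0)) (iMatPow R M q.1.2 1 0) a b)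
            = fun q => bMul R (M 1 1)
                (bMul R (iMatPow R M q.1.1 (i'+1) 0) (iMatPow R M q.1.2 1 0)) a b :=
          funext fun q => aux_bMul_assoc hR _ _ _ _ _
        rw [h1, aux_factor hR]
        have h2 : (fun c d => R.iSum fun q : {q : ℕ × ℕ // q.1 + q.2 = m} =>
            bMul R (iMatPow R M q.1.1 (i'+1) 0) (iMatPow R M q.1.2 1 0) c d)
            = iMatPow R M m (i'+1+1) 0 :=
          funext fun c => funext fun d => IH (i'+1) c d
        rw [h2]
      have hB : R.iSum (fun q : {q : ℕ × ℕ // q.1 + q.2 = m} =>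
          bMul R (bMul R (M 1 0) (iMatPow R M q.1.1 (i'+1-1) 0)) (iMatPow R M q.1.2 1 0) a b)
          = bMul R (M 1 0) (iMatPow R M m (i'+1-1+1) 0) a b := by
        have h1 : (fun q : {q : ℕ × ℕ // q.1 + q.2 = m} =>
            bMul R (bMul R (M 1 0) (iMatPow R M q.1.1 (i'+1-1) 0)) (iMatPow R M q.1.2 1 0) a b)
            = fun q => bMul R (M 1 0)
                (bMul R (iMatPow R M q.1.1 (i'+1-1) 0) (iMatPow R M q.1.2 1 0)) a b :=
          funext fun q => aux_bMul_assoc hR _ _ _ _ _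
        rw [h1, aux_factor hR]
        have h2 : (fun c d => R.iSum fun q : {q : ℕ × ℕ // q.1 + q.2 = m} =>
            bMul R (iMatPow R M q.1.1 (i'+1-1) 0) (iMatPow R M q.1.2 1 0) c d)
            = iMatPow R M m (i'+1-1+1) 0 :=
          funext fun c => funext fun d => IH (i'+1-1) c d
        rw [h2]
      rw [hA, hC, hB]
      rw [aux_rec hR M hM m (i'+1+1) (by omega)]
      rfl

lemma aux_star_mul (hR : R.IsComplete) (M : IMat n S) (hM : IsRoc R M) (i : ℕ) :
    iStar R M (i+1) 0 = bMul R (iStar R M i 0) (iStar R M 1 0) := by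
  funext a b
  have h1 : iStar R M (i+1) 0 a b
      = R.iSum (fun q : ℕ × ℕ => R.iSum fun c : Fin n =>
          R.mul (iMatPow R M q.1 i 0 a c) (iMatPow R M q.2 1 0 c b)) := by
    have hp := hR.iSum_partition (fun q : ℕ × ℕ => q.1 + q.2)
      (fun q : ℕ × ℕ => R.iSum fun c : Fin n =>
        R.mul (iMatPow R M q.1 i 0 a c) (iMatPow R M q.2 1 0 c b))
    rw [← hp]
    show R.iSum (fun m : ℕ => iMatPow R M m (i+1) 0 a b) = _
    have h2 : ∀ m : ℕ, iMatPow R M m (i+1) 0 a b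
        = R.iSum (fun x : {q : ℕ × ℕ // q.1 + q.2 = m} => R.iSum fun c : Fin n =>
            R.mul (iMatPow R M x.1.1 i 0 a c) (iMatPow R M x.1.2 1 0 c b)) :=
      fun m => (aux_key hR M hM m i a b).symm
    simp only [h2]
  have h3 : bMul R (iStar R M i 0) (iStar R M 1 0) a b
      = R.iSum (fun q : ℕ × ℕ => R.iSum fun c : Fin n =>
          R.mul (iMatPow R M q.1 i 0 a c) (iMatPow R M q.2 1 0 c b)) := by
    show R.iSum (fun c : Fin n => R.mul (R.iSum fun t : ℕ => iMatPow R M t i 0 a c)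
        (R.iSum fun s : ℕ => iMatPow R M s 1 0 c b)) = _
    have hc : ∀ c : Fin n, R.mul (R.iSum fun t : ℕ => iMatPow R M t i 0 a c)
        (R.iSum fun s : ℕ => iMatPow R M s 1 0 c b)
        = R.iSum (fun t : ℕ => R.iSum fun s : ℕ =>
            R.mul (iMatPow R M t i 0 a c) (iMatPow R M s 1 0 c b)) := by
      intro c
      rw [hR.iSum_mul]
      have h4 : ∀ t : ℕ, R.mul (iMatPow R M t i 0 a c)
          (R.iSum fun s : ℕ => iMatPow R M s 1 0 c b)
          = R.iSum fun s : ℕ => R.mul (iMatPow R M t i 0 a c) (iMatPow R M s 1 0 c b) :=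
        fun t => hR.mul_iSum _ _
      simp only [h4]
    simp only [hc]
    rw [aux_iSum_swap hR]
    have h5 : ∀ t : ℕ, R.iSum (fun c : Fin n => R.iSum fun s : ℕ =>
        R.mul (iMatPow R M t i 0 a c) (iMatPow R M s 1 0 c b))
        = R.iSum (fun s : ℕ => R.iSum fun c : Fin n =>
            R.mul (iMatPow R M t i 0 a c) (iMatPow R M s 1 0 c b)) :=
      fun t => aux_iSum_swap hR _
    simp only [h5]
    exact (aux_iSum_prod_fst hR (fun q : ℕ × ℕ => R.iSum fun c : Fin n =>
        R.mul (iMatPow R M q.1 i 0 a c) (iMatPow R M q.2 1 0 c b))).symm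
  exact h1.trans h3.symm

lemma aux_pow_succ (hR : R.IsComplete) (X : Blk n S) :
    ∀ i : ℕ, bMul R (bPow R X i) X = bPow R X (i+1) := by
  intro i
  induction i with
  | zero =>
    funext a b
    show bMul R (bOne R) X a b = bMul R X (bOne R) a b
    rw [aux_bMul_one_left hR, aux_bMul_one_right hR]
  | succ i IH =>
    funext a b
    show bMul R (bMul R X (bPow R X i)) X a b = bMul R X (bPow R X (i+1)) a b
    rw [aux_bMul_assoc hR, IH]

end Stmt1Main
/-- Let `S` be a complete starsemiring and `M` a roc matrix
over `S^{n×n}` with counter symbol `p`. Then for all `i ≥ 0`,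
`(M*)_{p^i,ε} = ((M*)_{p,ε})^i`. -/
theorem stmt_1 {S : Type} (R : CSOps S) (hR : R.IsComplete) {n : ℕ} (hn : 1 ≤ n)
    (M : IMat n S) (hM : IsRoc R M) (i : ℕ) :
    iStar R M i 0 = bPow R (iStar R M 1 0) i := by
  induction i with
  | zero =>
    funext a b
    show R.iSum (fun m : ℕ => iMatPow R M m 0 0 a b) = bOne R a b
    rw [aux_split_single hR (fun m : ℕ => iMatPow R M m 0 0 a b) 0]
    have hz : (fun x : {m : ℕ // m ≠ 0} => iMatPow R M x.1 0 0 a b) = fun _ => R.zero := by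
      funext x
      obtain ⟨m, hm⟩ := x
      match m, hm with
      | 0, hm => exact absurd rfl hm
      | m+1, _ =>
        show iMatPow R M (m+1) 0 0 a b = R.zero
        rw [aux_row0 hR M hM m]
        rfl
    rw [hz, aux_iSum_zero hR, hR.add_comm, hR.zero_add]
    show (if (0 : ℕ) = 0 then bOne R else bZero R) a b = bOne R a b
    rw [if_pos rfl]
  | succ i IH =>
    rw [aux_star_mul hR M hM i, IH]
    exact aux_pow_succ hR (iStar R M 1 0) i
end
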